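/- Let F ∈ L^{N×NM} define a BCN and let R be an equivalence relation on Δ_N induced by a full row rank logical matrix C ∈ L^{Ñ×N}, such that (a,b) ∈ R implies (F⋉u⋉a, F⋉u⋉b) ∈ R for all u ∈ Δ_M. For each 1 ≤ k ≤ M set F_k = F⋉δ_M^k ∈ L^{N×N} and F̃_k = C ⊙ F_k ⊙ C^T (Boolean matrix product). Then each F̃_k is a logical matrix in L^{Ñ×Ñ}, i.e., every column of F̃_k contains exactly one 1. -/
import Mathlib


open Matrix

noncomputable section
open scoped Classical

/-- The `i`-th canonical basis vector of length `N`. -/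
def canon {N : ℕ} (i : Fin N) : Fin N → ℝ := Pi.single i 1

/-- `Delta N` is the set of canonical basis vectors of length `N`. -/
def Delta (N : ℕ) : Set (Fin N → ℝ) := {v | ∃ i, v = canon i}

/-- A logical matrix: every column is a canonical basis vector. -/
def IsLogical {m : ℕ} {J : Type*} (A : Matrix (Fin m) J ℝ) : Prop :=
  ∀ j : J, ∃ i : Fin m, (fun r => A r j) = canon i

/-- Full row rank for a logical matrix: every canonical vector occurs among the columns. -/
def FullRowRank {m : ℕ} {J : Type*} (A : Matrix (Fin m) J ℝ) : Prop :=
  ∀ i : Fin m, ∃ j : J, (fun r => A r j) = canon i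

/-- Semitensor product `F ⋉ u ⋉ x` for a BCN matrix `F ∈ L^{N×NM}`:
`F` times the Kronecker product `u ⊗ x`. -/
def stp {N M : ℕ} (F : Matrix (Fin N) (Fin M × Fin N) ℝ)
    (u : Fin M → ℝ) (x : Fin N → ℝ) : Fin N → ℝ :=
  F.mulVec (fun p => u p.1 * x p.2)

/-- Boolean product of (0,1)-matrices: `(A ⊙ B) i k = ⋁ j, A i j ∧ B j k`. -/
def boolProd {I J K : Type*} (A : Matrix I J ℝ) (B : Matrix J K ℝ) : Matrix I K ℝ :=
  fun i k => if ∃ j, A i j = 1 ∧ B j k = 1 then 1 else 0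

/-- The `N×N` block `F_k = F ⋉ δ_M^k` of `F`. -/
def blockOf {N M : ℕ} (F : Matrix (Fin N) (Fin M × Fin N) ℝ) (k : Fin M) :
    Matrix (Fin N) (Fin N) ℝ :=
  fun r s => F r (k, s)

/-- The matrix `F̃ = [F̃_1 … F̃_M]` of the quotient system, `F̃_k = C ⊙ F_k ⊙ Cᵀ`. -/
def quotMat {N M Nt : ℕ} (F : Matrix (Fin N) (Fin M × Fin N) ℝ)
    (C : Matrix (Fin Nt) (Fin N) ℝ) : Matrix (Fin Nt) (Fin M × Fin Nt) ℝ :=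
  fun i p => boolProd (boolProd C (blockOf F p.1)) Cᵀ i p.2

lemma canon_apply {N : ℕ} (i r : Fin N) : canon i r = if r = i then 1 else 0 := by
  simp [canon, Pi.single_apply]

lemma mulVec_single_one {J : Type*} [Fintype J] [DecidableEq J] {m : ℕ}
    (A : Matrix (Fin m) J ℝ) (j : J) :
    A.mulVec (Pi.single j 1) = fun r => A r j := by
  funext r
  simp [Matrix.mulVec, dotProduct, Pi.single_apply, mul_ite]

lemma mulVec_canon {N : ℕ} {m : ℕ} (A : Matrix (Fin m) (Fin N) ℝ) (j : Fin N) :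
    A.mulVec (canon j) = fun r => A r j := by
  simpa [canon] using _root_.mulVec_single_one A j

lemma stp_canon {N M : ℕ} (F : Matrix (Fin N) (Fin M × Fin N) ℝ) (k : Fin M) (s : Fin N) :
    stp F (canon k) (canon s) = fun r => F r (k, s) := by
  have h : (fun p : Fin M × Fin N => canon k p.1 * canon s p.2)
      = Pi.single (k, s) (1 : ℝ) := by
    funext p
    rcases p with ⟨p1, p2⟩
    simp [canon_apply, Pi.single_apply, Prod.ext_iff, ite_and]
    by_cases h1 : p1 = k <;> by_cases h2 : p2 = s <;> simp [h1, h2]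
  rw [stp, h]
  exact _root_.mulVec_single_one F (k, s)

lemma canon_inj {N : ℕ} {i j : Fin N} (h : canon i = canon j) : i = j := by
  by_contra hne
  have := congrFun h i
  simp [canon_apply, hne] at this

/-- under the invariance condition, each `F̃_k = C ⊙ F_k ⊙ Cᵀ` is a
logical matrix (every column contains exactly one `1`). -/
theorem stmt3 {N M Nt : ℕ} (F : Matrix (Fin N) (Fin M × Fin N) ℝ) (hF : IsLogical F)
    (C : Matrix (Fin Nt) (Fin N) ℝ) (hC : IsLogical C) (hfrr : FullRowRank C)
    (hinv : ∀ a ∈ Delta N, ∀ b ∈ Delta N, C.mulVec a = C.mulVec b →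
      ∀ u ∈ Delta M, C.mulVec (stp F u a) = C.mulVec (stp F u b)) :
    ∀ k : Fin M, IsLogical (boolProd (boolProd C (blockOf F k)) Cᵀ) := by
  intro k t
  obtain ⟨j, hj⟩ := hfrr t
  obtain ⟨fj, hfj⟩ := hF (k, j)
  obtain ⟨i0, hi0⟩ := hC fj
  have hCi0 : C i0 fj = 1 := by simpa [canon_apply] using congrFun hi0 i0
  have hFfj : F fj (k, j) = 1 := by simpa [canon_apply] using congrFun hfj fj
  have hCtj : Cᵀ j t = 1 := by simpa [canon_apply] using congrFun hj t
  have h1 : boolProd C (blockOf F k) i0 j = 1 := by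
    unfold boolProd
    exact if_pos ⟨fj, hCi0, hFfj⟩
  refine ⟨i0, ?_⟩
  funext r
  rw [canon_apply]
  by_cases hr : r = i0
  · rw [if_pos hr, hr]
    show boolProd (boolProd C (blockOf F k)) Cᵀ i0 t = 1
    unfold boolProd
    unfold boolProd at h1
    exact if_pos ⟨j, h1, hCtj⟩
  · rw [if_neg hr]
    show boolProd (boolProd C (blockOf F k)) Cᵀ r t = 0
    unfold boolProd
    rw [if_neg]
    rintro ⟨s, hs1, hs2⟩
    obtain ⟨cs, hcs⟩ := hC s
    have hcst : cs = t := by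
      have h := congrFun hcs t
      rw [Matrix.transpose_apply] at hs2
      rw [hs2, canon_apply] at h
      by_contra hne
      simp [Ne.symm hne] at h
    subst hcst
    by_cases hex : ∃ j', C r j' = 1 ∧ blockOf F k j' s = 1
    · obtain ⟨j', hCj', hFj'⟩ := hex
      obtain ⟨fs, hfs⟩ := hF (k, s)
      have hj'fs : j' = fs := by
        have h := congrFun hfs j'
        rw [blockOf] at hFj'
        rw [hFj', canon_apply] at h
        by_contra hne
        simp [hne] at h
      have hCrfs : C r fs = 1 := hj'fs ▸ hCj'
      have hmv : C.mulVec (canon s) = C.mulVec (canon j) := by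
        rw [mulVec_canon, mulVec_canon, hcs, hj]
      have key := hinv (canon s) ⟨s, rfl⟩ (canon j) ⟨j, rfl⟩ hmv (canon k) ⟨k, rfl⟩
      rw [stp_canon, stp_canon] at key
      rw [show (fun r => F r (k, s)) = canon fs from hfs,
          show (fun r => F r (k, j)) = canon fj from hfj,
          mulVec_canon, mulVec_canon] at key
      have hcol : (fun r => C r fs) = canon i0 := by rw [key, hi0]
      have h := congrFun hcol r
      rw [hCrfs, canon_apply] at h
      simp [hr] at h
    · rw [if_neg hex] at hs1
      exact zero_ne_one hs1
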